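/- arXiv:1806.04087 — 4 statements merged into one kernel-verified Lean document; each statement's English description precedes it below -/
import Mathlib

section
/- Let U and W be real n₁×r and n₂×r matrices, each with full column rank r. Then the Frobenius norm of U·Wᵀ satisfies ‖U Wᵀ‖_F ≥ √r · (det(UᵀU) · det(WᵀW))^{1/(2r)}. -/
/-!
Write `A = UᵀU = XᵀX` with `X` square, and `B = WᵀW`. Then `∑ᵢⱼ (UWᵀ)ᵢⱼ² = tr(AB) = tr(X B Xᵀ)`, and `X B Xᵀ` is
positive semidefinite with determinant `det A · det B`. AM–GM on its eigenvalues gives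
`r · (det A · det B)^(1/r) ≤ tr(AB)`; take square roots.
-/

open Matrix

namespace Matrix

variable {n : Type*} [Fintype n]

theorem sum_sq_mul_transpose_apply {R m₁ m₂ : Type*} [CommSemiring R] [Fintype m₁] [Fintype m₂]
    (U : Matrix m₁ n R) (W : Matrix m₂ n R) :
    ∑ i, ∑ j, (U * Wᵀ) i j ^ 2 = (Uᵀ * U * (Wᵀ * W)).trace := by
  have : ∑ i, ∑ j, (U * Wᵀ) i j ^ 2 = ((U * Wᵀ)ᵀ * (U * Wᵀ)).trace := by
    simp only [trace, diag, mul_apply (M := (U * Wᵀ)ᵀ), transpose_apply, sq]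
    exact Finset.sum_comm
  rw [this, transpose_mul, transpose_transpose, Matrix.mul_assoc, trace_mul_comm,
    Matrix.mul_assoc, Matrix.mul_assoc, Matrix.mul_assoc]

variable [DecidableEq n]

theorem PosSemidef.card_mul_det_rpow_le_trace {C : Matrix n n ℝ} (hC : C.PosSemidef) :
    Fintype.card n * C.det ^ ((1 : ℝ) / Fintype.card n) ≤ C.trace := by
  set ev := hC.isHermitian.eigenvalues
  rcases isEmpty_or_nonempty n with hn | hn
  · simp
  have hcard : (0 : ℝ) < Fintype.card n := by exact_mod_cast Fintype.card_pos
  have hev : ∀ i ∈ Finset.univ, 0 ≤ ev i := fun i _ ↦ hC.eigenvalues_nonneg i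
  have amgm := Real.geom_mean_le_arith_mean Finset.univ (fun _ ↦ 1) ev (by simp)
    (by simpa using Fintype.card_pos) hev
  simp only [Real.rpow_one, Finset.sum_const, Finset.card_univ, nsmul_eq_mul, mul_one,
    one_mul] at amgm
  rw [hC.isHermitian.det_eq_prod_eigenvalues, hC.isHermitian.trace_eq_sum_eigenvalues]
  simp only [RCLike.ofReal_real_eq_id, id_eq]
  rwa [one_div, ← le_div_iff₀' hcard]

open scoped MatrixOrder in
theorem PosSemidef.card_mul_det_mul_det_rpow_le_trace_mul {A B : Matrix n n ℝ}
    (hA : A.PosSemidef) (hB : B.PosSemidef) :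
    Fintype.card n * (A.det * B.det) ^ ((1 : ℝ) / Fintype.card n) ≤ (A * B).trace := by
  obtain ⟨X, rfl⟩ := CStarAlgebra.nonneg_iff_eq_star_mul_self.mp hA.nonneg
  have hXBX : (X * B * Xᴴ).PosSemidef := hB.mul_mul_conjTranspose_same X
  have hdet : (X * B * Xᴴ).det = (star X * X).det * B.det := by
    simp only [det_mul, star_eq_conjTranspose]
    ring
  have htrace : (X * B * Xᴴ).trace = (star X * X * B).trace := by
    rw [trace_mul_comm, ← Matrix.mul_assoc, star_eq_conjTranspose]
  simpa only [hdet, htrace] using hXBX.card_mul_det_rpow_le_trace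

end Matrix

theorem frobenius_norm_mul_transpose_ge_general {n₁ n₂ r : ℕ}
    (U : Matrix (Fin n₁) (Fin r) ℝ) (W : Matrix (Fin n₂) (Fin r) ℝ) :
    Real.sqrt r * ((Uᵀ * U).det * (Wᵀ * W).det) ^ ((1 : ℝ) / (2 * r)) ≤
      Real.sqrt (∑ i, ∑ j, ((U * Wᵀ) i j) ^ 2) := by
  have hU : (Uᵀ * U).PosSemidef := posSemidef_conjTranspose_mul_self U
  have hW : (Wᵀ * W).PosSemidef := posSemidef_conjTranspose_mul_self W
  have hdet : 0 ≤ (Uᵀ * U).det * (Wᵀ * W).det := mul_nonneg hU.det_nonneg hW.det_nonneg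
  have amgm := hU.card_mul_det_mul_det_rpow_le_trace_mul hW
  rw [Fintype.card_fin, ← sum_sq_mul_transpose_apply] at amgm
  calc Real.sqrt r * ((Uᵀ * U).det * (Wᵀ * W).det) ^ ((1 : ℝ) / (2 * r))
      = Real.sqrt (r * ((Uᵀ * U).det * (Wᵀ * W).det) ^ ((1 : ℝ) / r)) := by
        rw [Real.sqrt_mul r.cast_nonneg, Real.sqrt_eq_rpow (_ ^ _), ← Real.rpow_mul hdet]
        ring_nf
    _ ≤ Real.sqrt (∑ i, ∑ j, ((U * Wᵀ) i j) ^ 2) := Real.sqrt_le_sqrt amgm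

theorem frobenius_norm_mul_transpose_ge {n₁ n₂ r : ℕ}
    (U : Matrix (Fin n₁) (Fin r) ℝ) (W : Matrix (Fin n₂) (Fin r) ℝ)
    (hU : LinearIndependent ℝ U.transpose) (hW : LinearIndependent ℝ W.transpose) :
    Real.sqrt r * ((Uᵀ * U).det * (Wᵀ * W).det) ^ ((1 : ℝ) / (2 * r)) ≤
      Real.sqrt (∑ i, ∑ j, ((U * Wᵀ) i j) ^ 2) :=
  frobenius_norm_mul_transpose_ge_general U W
end

section
/- Let L₁ be a rank-r lattice with det(L₁) ≥ d^{r/2}, and let L₂ be any rank-r lattice. Let U = (u₁,…,u_r) and W = (w₁,…,w_r) be bases of L₁ and L₂ respectively, and let v = Σᵢ uᵢ ⊗ wᵢ = U Wᵀ. Then ‖v‖₂ ≥ √d · λ₁(L₂). -/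
open Matrix
open scoped ENNReal

noncomputable def lambdaOne (p : ℝ≥0∞) {n m : Type} [Fintype n] [Fintype m]
    (B : Matrix n m ℝ) : ℝ :=
  sInf {t : ℝ | ∃ x : m → ℤ, B.mulVec (fun j => (x j : ℝ)) ≠ 0 ∧
    t = ‖(WithLp.equiv p (n → ℝ)).symm (B.mulVec (fun j => (x j : ℝ)))‖}


/-!
Write `G = UᵀU` and `H = WᵀW` for the Gram matrices, so that `‖UWᵀ‖_F² = tr (G H)`. Factoring
`H = BᵀB`, we get `tr (G H) = tr (B G Bᵀ) ≥ r (det G · det H)^{1/r}` by AM-GM on the eigenvalues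
of `B G Bᵀ`. On the other side `‖W x‖ = ‖B x‖`, and Minkowski's theorem for the lattice `B ℤʳ`
of covolume `√(det H)` gives `λ₁(W)² ≤ r (det H)^{1/r}`. Since `det G ≥ dʳ`, multiplying the two
bounds gives `d λ₁(W)² ≤ ‖UWᵀ‖_F²`.
-/

open MeasureTheory

section

variable {ι : Type*} [Fintype ι] [DecidableEq ι]

open scoped MatrixOrder in
theorem Matrix.PosSemidef.exists_eq_transpose_mul_self {A : Matrix ι ι ℝ} (hA : A.PosSemidef) :
    ∃ B : Matrix ι ι ℝ, A = Bᵀ * B :=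
  CStarAlgebra.nonneg_iff_eq_star_mul_self.mp hA.nonneg

theorem Matrix.PosSemidef.card_mul_det_rpow_le_trace_s9 {A : Matrix ι ι ℝ} (hA : A.PosSemidef) :
    Fintype.card ι * A.det ^ (Fintype.card ι : ℝ)⁻¹ ≤ A.trace := by
  rcases isEmpty_or_nonempty ι with hι | hι
  · simp
  set μ := hA.isHermitian.eigenvalues
  have hμ : ∀ i, 0 ≤ μ i := hA.eigenvalues_nonneg
  have hcard : (0 : ℝ) < Fintype.card ι := by exact_mod_cast Fintype.card_pos
  have amgm := Real.geom_mean_le_arith_mean_weighted Finset.univ (fun _ => (Fintype.card ι : ℝ)⁻¹)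
    μ (fun _ _ => by positivity) (by simp [hcard.ne']) (fun i _ => hμ i)
  rw [Real.finsetProd_rpow _ _ (fun i _ => hμ i), ← Finset.mul_sum] at amgm
  rw [hA.isHermitian.det_eq_prod_eigenvalues, hA.isHermitian.trace_eq_sum_eigenvalues]
  simp only [RCLike.ofReal_real_eq_id, id]
  rw [← le_div_iff₀' hcard, div_eq_inv_mul]
  exact amgm

theorem Matrix.PosSemidef.card_mul_det_mul_det_rpow_le_trace_mul_s9 {G H : Matrix ι ι ℝ}
    (hG : G.PosSemidef) (hH : H.PosSemidef) :
    Fintype.card ι * (G.det * H.det) ^ (Fintype.card ι : ℝ)⁻¹ ≤ (G * H).trace := by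
  obtain ⟨B, rfl⟩ := hH.exists_eq_transpose_mul_self
  have hBGB : (B * G * Bᵀ).PosSemidef := by
    simpa using hG.mul_mul_conjTranspose_same B
  calc _ = Fintype.card ι * (B * G * Bᵀ).det ^ (Fintype.card ι : ℝ)⁻¹ := by
        simp only [det_mul, det_transpose]; ring_nf
    _ ≤ (B * G * Bᵀ).trace := hBGB.card_mul_det_rpow_le_trace_s9
    _ = (G * (Bᵀ * B)).trace := by rw [trace_mul_comm, ← Matrix.mul_assoc, trace_mul_comm]

end

theorem Matrix.sum_sq_mul_transpose_eq_trace {m n k : Type*} [Fintype m] [Fintype n] [Fintype k]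
    (U : Matrix m k ℝ) (W : Matrix n k ℝ) :
    ∑ i, ∑ j, (U * Wᵀ) i j ^ 2 = (Uᵀ * U * (Wᵀ * W)).trace := by
  have : ∑ i, ∑ j, (U * Wᵀ) i j ^ 2 = ((U * Wᵀ) * (U * Wᵀ)ᵀ).trace := by
    simp only [trace, diag, mul_apply (M := U * Wᵀ), transpose_apply, sq]
  rw [this, transpose_mul, transpose_transpose,
    show U * Wᵀ * (W * Uᵀ) = U * (Wᵀ * W * Uᵀ) by simp only [Matrix.mul_assoc],
    trace_mul_comm, Matrix.mul_assoc, trace_mul_comm]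

theorem Matrix.norm_toLp_mulVec_sq {m n : Type*} [Fintype m] [Fintype n] (A : Matrix m n ℝ)
    (x : n → ℝ) :
    ‖WithLp.toLp 2 (A *ᵥ x)‖ ^ 2 = x ⬝ᵥ (Aᵀ * A) *ᵥ x := by
  rw [EuclideanSpace.real_norm_sq_eq, ← mulVec_mulVec, dotProduct_mulVec, vecMul_transpose]
  simp [dotProduct, sq]

theorem EuclideanSpace.norm_toLp_sq_le_card_mul {m : Type*} [Fintype m] (v : m → ℝ) :
    ‖WithLp.toLp 2 v‖ ^ 2 ≤ Fintype.card m * ‖v‖ ^ 2 := by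
  rw [EuclideanSpace.real_norm_sq_eq]
  calc ∑ i, v i ^ 2 ≤ ∑ _i : m, ‖v‖ ^ 2 := Finset.sum_le_sum fun i _ => by
        simpa using pow_le_pow_left₀ (abs_nonneg _) (norm_le_pi_norm v i) 2
    _ = Fintype.card m * ‖v‖ ^ 2 := by simp

/-- Minkowski: the sup-norm ball of radius `|det B|^{1/n}` has volume `2ⁿ |det B|`, which is
`2ⁿ` times the covolume of `B ℤⁿ`. -/
theorem Matrix.exists_ne_zero_norm_mulVec_intCast_le {ι : Type*} [Fintype ι] [DecidableEq ι]
    [Nonempty ι] (B : Matrix ι ι ℝ) (hB : B.det ≠ 0) :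
    ∃ x : ι → ℤ, x ≠ 0 ∧ ‖B *ᵥ (fun i => (x i : ℝ))‖ ≤ |B.det| ^ (Fintype.card ι : ℝ)⁻¹ := by
  let b := (Pi.basisFun ℝ ι).map (B.toLinearEquiv' (B.invertibleOfIsUnitDet hB.isUnit))
  have hb : ∀ i, b i = fun j => B j i := fun i => by
    ext j
    simp only [b, Module.Basis.map_apply, Pi.basisFun_apply]
    change (B *ᵥ Pi.single i 1) j = B j i
    simp [mulVec_single]
  set c := |B.det| ^ (Fintype.card ι : ℝ)⁻¹
  have hc : 0 ≤ c := by positivity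
  have hvol : volume (ZSpan.fundamentalDomain b) * 2 ^ Module.finrank ℝ (ι → ℝ) ≤
      volume (Metric.closedBall (0 : ι → ℝ) c) := by
    have hdet : Matrix.of b = Bᵀ := by ext i j; simp [hb]
    have hcpow : c ^ Fintype.card ι = |B.det| := by
      rw [← Real.rpow_natCast, ← Real.rpow_mul (abs_nonneg _),
        inv_mul_cancel₀ (by exact_mod_cast Fintype.card_ne_zero), Real.rpow_one]
    rw [ZSpan.volume_fundamentalDomain, hdet, det_transpose, Real.volume_pi_closedBall _ hc,
      Module.finrank_fintype_fun_eq_card, mul_pow, hcpow, mul_comm,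
      ENNReal.ofReal_mul (by positivity)]
    simp
  have : Countable (Submodule.span ℤ (Set.range b)).toAddSubgroup :=
    inferInstanceAs (Countable (Submodule.span ℤ (Set.range b)))
  obtain ⟨v, hv0, hvs⟩ := exists_ne_zero_mem_lattice_of_measure_mul_two_pow_le_measure
    (ZSpan.isAddFundamentalDomain' b volume) (fun _ => by simp) (convex_closedBall _ _)
    (isCompact_closedBall _ _) hvol
  obtain ⟨x, hx⟩ := (Submodule.mem_span_range_iff_exists_fun ℤ).mp v.2
  have hBx : B *ᵥ (fun i => (x i : ℝ)) = v := by
    rw [← hx]; ext j; simp [hb, mulVec, dotProduct, Finset.sum_apply, mul_comm]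
  refine ⟨x, fun h => hv0 ?_, by simpa [hBx] using hvs⟩
  ext1
  rw [← hBx, h]
  simp only [Pi.zero_apply, Int.cast_zero, ZeroMemClass.coe_zero]
  exact mulVec_zero B

section lambdaOne

variable {n m : Type} [Fintype n] [Fintype m]

theorem lambdaOne_nonneg (B : Matrix n m ℝ) : 0 ≤ lambdaOne 2 B :=
  Real.sInf_nonneg (by rintro _ ⟨_, _, rfl⟩; exact norm_nonneg _)

theorem lambdaOne_le_norm_mulVec {B : Matrix n m ℝ} {x : m → ℤ}
    (hx : B *ᵥ (fun j => (x j : ℝ)) ≠ 0) :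
    lambdaOne 2 B ≤ ‖WithLp.toLp 2 (B *ᵥ fun j => (x j : ℝ))‖ :=
  csInf_le ⟨0, by rintro _ ⟨_, _, rfl⟩; exact norm_nonneg _⟩ ⟨x, hx, rfl⟩

theorem lambdaOne_of_isEmpty [IsEmpty m] (B : Matrix n m ℝ) : lambdaOne 2 B = 0 := by
  have hB : ∀ v : m → ℝ, B *ᵥ v = 0 := fun v => by rw [Subsingleton.elim v 0, mulVec_zero]
  simp [lambdaOne, hB]

theorem lambdaOne_sq_le_card_mul_det_rpow [DecidableEq m] (W : Matrix n m ℝ)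
    (hW : LinearIndependent ℝ Wᵀ) :
    lambdaOne 2 W ^ 2 ≤ Fintype.card m * (Wᵀ * W).det ^ (Fintype.card m : ℝ)⁻¹ := by
  rcases isEmpty_or_nonempty m with hm | hm
  · simp [lambdaOne_of_isEmpty]
  have hWinj : Function.Injective W.mulVec := mulVec_injective_iff.mpr hW
  have hgram : (Wᵀ * W).PosDef := by
    simpa using PosDef.conjTranspose_mul_self W hWinj
  obtain ⟨B, hB⟩ := hgram.posSemidef.exists_eq_transpose_mul_self
  have hdetB : (Wᵀ * W).det = B.det ^ 2 := by rw [hB, det_mul, det_transpose, sq]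
  obtain ⟨x, hx0, hBx⟩ := B.exists_ne_zero_norm_mulVec_intCast_le
    (pow_ne_zero_iff two_ne_zero |>.mp (hdetB ▸ hgram.det_pos.ne'))
  set xr : m → ℝ := fun j => (x j : ℝ)
  have hWx : W *ᵥ xr ≠ 0 := fun h => hx0 <| funext fun j => by
    simpa [xr] using congrFun (hWinj (h.trans (mulVec_zero W).symm)) j
  calc lambdaOne 2 W ^ 2 ≤ ‖WithLp.toLp 2 (W *ᵥ xr)‖ ^ 2 :=
        pow_le_pow_left₀ (lambdaOne_nonneg W) (lambdaOne_le_norm_mulVec hWx) 2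
    _ = ‖WithLp.toLp 2 (B *ᵥ xr)‖ ^ 2 := by
        rw [norm_toLp_mulVec_sq, norm_toLp_mulVec_sq, hB]
    _ ≤ Fintype.card m * ‖B *ᵥ xr‖ ^ 2 := EuclideanSpace.norm_toLp_sq_le_card_mul _
    _ ≤ Fintype.card m * (|B.det| ^ (Fintype.card m : ℝ)⁻¹) ^ 2 := by gcongr
    _ = Fintype.card m * (Wᵀ * W).det ^ (Fintype.card m : ℝ)⁻¹ := by
        rw [hdetB, ← sq_abs B.det, Real.rpow_pow_comm (abs_nonneg _)]

end lambdaOne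

theorem le_rpow_inv_of_rpow_half_le_sqrt {d a : ℝ} {r : ℕ} (hd : 0 ≤ d) (ha : 0 ≤ a)
    (hr : r ≠ 0) (h : d ^ ((r : ℝ) / 2) ≤ √a) : d ≤ a ^ (r : ℝ)⁻¹ := by
  have hdr : d ^ (r : ℝ) ≤ a := by
    have := pow_le_pow_left₀ (by positivity) h 2
    rwa [Real.sq_sqrt ha, ← Real.rpow_natCast, ← Real.rpow_mul hd, Nat.cast_ofNat,
      div_mul_cancel₀ _ two_ne_zero] at this
  calc d = (d ^ (r : ℝ)) ^ (r : ℝ)⁻¹ := by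
        rw [← Real.rpow_mul hd, mul_inv_cancel₀ (by exact_mod_cast hr), Real.rpow_one]
    _ ≤ a ^ (r : ℝ)⁻¹ := by gcongr

theorem frobenius_ge_of_large_det_general {n₁ n₂ r : ℕ} (d : ℝ) (hd : 0 ≤ d)
    (U : Matrix (Fin n₁) (Fin r) ℝ) (W : Matrix (Fin n₂) (Fin r) ℝ)
    (hW : LinearIndependent ℝ W.transpose)
    (hdet : d ^ ((r : ℝ) / 2) ≤ Real.sqrt ((Uᵀ * U).det)) :
    Real.sqrt d * lambdaOne 2 W ≤ Real.sqrt (∑ i, ∑ j, ((U * Wᵀ) i j) ^ 2) := by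
  rcases eq_or_ne r 0 with rfl | hr
  · simp [lambdaOne_of_isEmpty]
  have hG : (Uᵀ * U).PosSemidef := by simpa using posSemidef_conjTranspose_mul_self U
  have hH : (Wᵀ * W).PosSemidef := by simpa using posSemidef_conjTranspose_mul_self W
  have hdG := le_rpow_inv_of_rpow_half_le_sqrt hd hG.det_nonneg hr hdet
  have hlam := lambdaOne_sq_le_card_mul_det_rpow W hW
  rw [Fintype.card_fin] at hlam
  rw [← Real.sqrt_sq (lambdaOne_nonneg W), ← Real.sqrt_mul hd]
  gcongr
  calc d * lambdaOne 2 W ^ 2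
      ≤ (Uᵀ * U).det ^ (r : ℝ)⁻¹ * (r * (Wᵀ * W).det ^ (r : ℝ)⁻¹) := by
        gcongr; exact Real.rpow_nonneg hG.det_nonneg _
    _ = r * ((Uᵀ * U).det * (Wᵀ * W).det) ^ (r : ℝ)⁻¹ := by
        rw [Real.mul_rpow hG.det_nonneg hH.det_nonneg]; ring
    _ ≤ (Uᵀ * U * (Wᵀ * W)).trace := by
        simpa only [Fintype.card_fin] using hG.card_mul_det_mul_det_rpow_le_trace_mul_s9 hH
    _ = ∑ i, ∑ j, (U * Wᵀ) i j ^ 2 := (sum_sq_mul_transpose_eq_trace U W).symm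

theorem frobenius_ge_of_large_det {n₁ n₂ r : ℕ} (d : ℝ) (hd : 0 ≤ d)
    (U : Matrix (Fin n₁) (Fin r) ℝ) (W : Matrix (Fin n₂) (Fin r) ℝ)
    (hU : LinearIndependent ℝ U.transpose) (hW : LinearIndependent ℝ W.transpose)
    (hdet : d ^ ((r : ℝ) / 2) ≤ Real.sqrt ((Uᵀ * U).det)) :
    Real.sqrt d * lambdaOne 2 W ≤ Real.sqrt (∑ i, ∑ j, ((U * Wᵀ) i j) ^ 2) :=
  frobenius_ge_of_large_det_general d hd U W hW hdet
end

section
/- Let L ⊆ ℤⁿ be an integer lattice such that every nonzero v ∈ L satisfies: v has at least d nonzero coordinates, or all coordinates of v are even and at least d/4 are nonzero, or all coordinates of v are even and ‖v‖₂ ≥ d. Let L' ⊆ L be a sublattice of rank r > 0. Then at least one of the following holds: (1) every basis matrix of L' has at least d nonzero rows; (2) every basis matrix of L' has only even entries and at least d/4 nonzero rows; (3) det(L') ≥ d^{r/2}. -/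
/-!
Let `T` be the set of nonzero rows of `B'`. Every basis matrix of `L'` has exactly the nonzero rows
`T`, and every vector of `L'` is supported on `T`. If `d ≤ |T|` we are in case (1). If
`d / 4 ≤ |T| < d`, no nonzero vector of `L'` has `d` nonzero coordinates, so all of them are even,
hence so is every basis matrix: case (2). Otherwise every nonzero vector of `L'` has fewer than
`d / 4` nonzero coordinates, so it has Euclidean norm at least `d`; moreover `r ≤ |T| < d`.
Minkowski's first theorem then gives `det L' ≥ (d / √r) ^ r ≥ d ^ (r / 2)`.
-/

open Finset MeasureTheory

theorem Real.rpow_div_two_le_div_sqrt_pow {x : ℝ} {r : ℕ} (hr : 0 < r) (hrx : r ≤ x) :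
    x ^ ((r : ℝ) / 2) ≤ (x / √r) ^ r := by
  have hx : 0 ≤ x := (Nat.cast_nonneg r).trans hrx
  have hsqrt : √x ≤ x / √r := by
    rw [le_div_iff₀ (by positivity)]
    calc √x * √r ≤ √x * √x := by gcongr
      _ = x := Real.mul_self_sqrt hx
  calc x ^ ((r : ℝ) / 2) = √x ^ r := by
        rw [Real.sqrt_eq_rpow, ← Real.rpow_natCast, ← Real.rpow_mul hx, one_div_mul_eq_div]
    _ ≤ (x / √r) ^ r := by gcongr

namespace Matrix

variable {m n ι R : Type*} [Fintype ι]

theorem exists_ne_zero_abs_mulVec_intCast_lt [DecidableEq ι]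
    (A : Matrix ι ι ℝ) (hA : A.det ≠ 0) {a : ℝ} (ha : 0 < a)
    (hdet : |A.det| < a ^ Fintype.card ι) :
    ∃ c : ι → ℤ, c ≠ 0 ∧ ∀ j, |(A *ᵥ fun i => (c i : ℝ)) j| < a := by
  let b : Module.Basis ι ℝ (ι → ℝ) := basisOfLinearIndependentOfCardEqFinrank' A.col
    (linearIndependent_cols_of_det_ne_zero hA) (Module.finrank_fintype_fun_eq_card ℝ).symm
  let S : Set (ι → ℝ) := Set.univ.pi fun _ => Set.Ioo (-a) a
  have hvol :
      volume (ZSpan.fundamentalDomain b) * 2 ^ Module.finrank ℝ (ι → ℝ) < volume S := by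
    have hb : Matrix.of b = Aᵀ := by ext; simp [b]
    rw [ZSpan.volume_fundamentalDomain, hb, det_transpose, volume_pi_pi,
      Module.finrank_fintype_fun_eq_card]
    simp only [Real.volume_Ioo, Finset.prod_const, Finset.card_univ]
    rw [show (2 : ENNReal) = ENNReal.ofReal 2 by simp, ← ENNReal.ofReal_pow (by norm_num),
      ← ENNReal.ofReal_mul (abs_nonneg _), ← ENNReal.ofReal_pow (by linarith),
      sub_neg_eq_add, ← two_mul, ENNReal.ofReal_lt_ofReal_iff (by positivity), mul_pow, mul_comm]
    gcongr
  have hsymm : ∀ x ∈ S, -x ∈ S := fun x hx i _ => by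
    simpa [and_comm, neg_lt] using hx i trivial
  have : Countable (Submodule.span ℤ (Set.range b)).toAddSubgroup :=
    inferInstanceAs (Countable (Submodule.span ℤ (Set.range b)))
  obtain ⟨⟨x, hx⟩, hx0, hxS⟩ := exists_ne_zero_mem_lattice_of_measure_mul_two_pow_lt_measure
    (ZSpan.isAddFundamentalDomain' b volume) hsymm
    (convex_pi fun _ _ => convex_Ioo _ _) hvol
  obtain ⟨c, rfl⟩ := (Submodule.mem_span_range_iff_exists_fun ℤ).mp hx
  have hAc : ∑ i, c i • b i = A *ᵥ fun i => (c i : ℝ) := by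
    ext j; simp [b, mulVec, dotProduct, mul_comm]
  refine ⟨c, fun hc => hx0 (by simp [hc]), fun j => abs_lt.mpr ?_⟩
  simpa [← hAc] using hxS j trivial

section Gram

open scoped MatrixOrder

variable [Fintype m] [CommRing R]

theorem sum_mulVec_sq (M : Matrix m ι R) (v : ι → R) :
    ∑ i, (M *ᵥ v) i ^ 2 = v ⬝ᵥ (Mᵀ * M) *ᵥ v := by
  rw [← mulVec_mulVec, dotProduct_mulVec, vecMul_transpose]
  simp only [dotProduct, sq]

theorem det_transpose_mul_self_ne_zero [DecidableEq ι] [LinearOrder R] [IsStrictOrderedRing R]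
    {M : Matrix m ι R} (hM : LinearIndependent R M.col) :
    (Mᵀ * M).det ≠ 0 := by
  intro h
  obtain ⟨v, hv0, hv⟩ := exists_mulVec_eq_zero_iff.mpr h
  refine hv0 (mulVec_injective_iff.mpr hM ?_)
  have hMv : (M *ᵥ v) ⬝ᵥ (M *ᵥ v) = v ⬝ᵥ (Mᵀ * M) *ᵥ v := by
    rw [← mulVec_mulVec, dotProduct_mulVec v Mᵀ, vecMul_transpose]
  rw [hv, dotProduct_zero] at hMv
  rw [dotProduct_self_eq_zero.mp hMv, mulVec_zero]

theorem pow_div_sqrt_card_le_sqrt_det_transpose_mul_self [DecidableEq ι] [Nonempty ι]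
    (M : Matrix m ι ℝ) (hM : (Mᵀ * M).det ≠ 0) {l : ℝ} (hl : 0 < l)
    (hmin : ∀ c : ι → ℤ, c ≠ 0 → l ≤ √(∑ i, (M *ᵥ fun j => (c j : ℝ)) i ^ 2)) :
    (l / √(Fintype.card ι)) ^ Fintype.card ι ≤ √(Mᵀ * M).det := by
  set G := Mᵀ * M
  set A := CFC.sqrt G
  have hG : G.PosSemidef := by simpa using posSemidef_conjTranspose_mul_self M
  have hA : A.PosSemidef := nonneg_iff_posSemidef.mp (CFC.sqrt_nonneg G)
  have hdetA : A.det = √G.det := by simpa using hG.det_sqrt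
  -- `‖A v‖ = ‖M v‖`, so `A ℤ^ι ⊆ ℝ^ι` is an isometric copy of `M ℤ^ι`, of covolume `det A`.
  have hnorm : ∀ v, ∑ i, (A *ᵥ v) i ^ 2 = ∑ i, (M *ᵥ v) i ^ 2 := fun v => by
    rw [sum_mulVec_sq, sum_mulVec_sq, ← conjTranspose_eq_transpose_of_trivial, hA.1.eq,
      CFC.sqrt_mul_sqrt_self G hG.nonneg]
  have hcard : (0 : ℝ) < Fintype.card ι := by exact_mod_cast Fintype.card_pos
  by_contra! hlt
  obtain ⟨c, hc0, hc⟩ := A.exists_ne_zero_abs_mulVec_intCast_lt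
    (by rw [hdetA]; exact Real.sqrt_ne_zero'.mpr (hG.det_nonneg.lt_of_ne' hM))
    (by positivity : 0 < l / √(Fintype.card ι))
    (by rwa [hdetA, abs_of_nonneg (Real.sqrt_nonneg _)])
  refine (hmin c hc0).not_gt ?_
  rw [← hnorm, Real.sqrt_lt' hl]
  calc ∑ i, (A *ᵥ fun j => (c j : ℝ)) i ^ 2 < ∑ _i : ι, (l / √(Fintype.card ι)) ^ 2 :=
        Finset.sum_lt_sum_of_nonempty Finset.univ_nonempty fun i _ =>
          sq_lt_sq' (abs_lt.mp (hc i)).1 (abs_lt.mp (hc i)).2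
    _ = l ^ 2 := by
        rw [Finset.sum_const, Finset.card_univ, nsmul_eq_mul, div_pow, Real.sq_sqrt hcard.le]
        field_simp

theorem pow_div_sqrt_card_le_sqrt_det_transpose_mul_self_int [DecidableEq ι] [Nonempty ι]
    (B : Matrix m ι ℤ) (hB : LinearIndependent ℤ B.col) {l : ℝ} (hl : 0 < l)
    (hmin : ∀ c : ι → ℤ, c ≠ 0 → l ≤ √(∑ i, ((B *ᵥ c) i : ℝ) ^ 2)) :
    (l / √(Fintype.card ι)) ^ Fintype.card ι ≤ √((Bᵀ * B).det : ℝ) := by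
  set M : Matrix m ι ℝ := B.map Int.cast
  have hdet : (Mᵀ * M).det = ((Bᵀ * B).det : ℝ) := by
    rw [Int.cast_det]
    exact congrArg det (Matrix.map_mul (f := Int.castRingHom ℝ)).symm
  have hM (c : ι → ℤ) : (M *ᵥ fun j => (c j : ℝ)) = fun i => ((B *ᵥ c) i : ℝ) :=
    funext fun i => (RingHom.map_mulVec (Int.castRingHom ℝ) B c i).symm
  rw [← hdet]
  refine M.pow_div_sqrt_card_le_sqrt_det_transpose_mul_self
    (by rw [hdet]; exact_mod_cast det_transpose_mul_self_ne_zero hB) hl fun c hc => ?_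
  simpa only [hM] using hmin c hc

end Gram

section Rows

variable [CommRing R]

theorem exists_apply_eq_mulVec_apply [DecidableEq ι] {C B : Matrix m ι R}
    (h : ∀ y, ∃ z, C *ᵥ y = B *ᵥ z) (i : m) (j : ι) : ∃ z, C i j = (B *ᵥ z) i := by
  obtain ⟨z, hz⟩ := h (Pi.single j 1)
  exact ⟨z, by rw [← hz, mulVec_single_one]; rfl⟩

theorem exists_mulVec_eq_mulVec_of_forall_col [Fintype n] {B : Matrix m n R}
    {C : Matrix m ι R} (h : ∀ c, ∃ x, (fun i => C i c) = B *ᵥ x) (z : ι → R) :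
    ∃ x, C *ᵥ z = B *ᵥ x := by
  choose X hX using h
  have hC : C = B * (of X)ᵀ := by
    ext i c
    simpa [mul_apply, mulVec, dotProduct] using congrFun (hX c) i
  exact ⟨(of X)ᵀ *ᵥ z, by rw [hC, mulVec_mulVec]⟩

variable [Fintype m] [DecidableEq R]

def nonzeroRows (C : Matrix m ι R) : Finset m :=
  {i | C.row i ≠ 0}

theorem filter_mulVec_ne_zero_subset_nonzeroRows (C : Matrix m ι R) (v : ι → R) :
    ({i | (C *ᵥ v) i ≠ 0} : Finset m) ⊆ C.nonzeroRows := by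
  intro i
  simp only [nonzeroRows, mem_filter_univ]
  contrapose!
  intro h
  change C.row i ⬝ᵥ v = 0
  rw [h, zero_dotProduct]

theorem nonzeroRows_subset_of_forall_exists_mulVec_eq [DecidableEq ι] {C B : Matrix m ι R}
    (h : ∀ y, ∃ z, C *ᵥ y = B *ᵥ z) : C.nonzeroRows ⊆ B.nonzeroRows := by
  intro i hi
  obtain ⟨j, hj⟩ : ∃ j, C i j ≠ 0 := by
    simpa [nonzeroRows, funext_iff] using hi
  obtain ⟨z, hz⟩ := exists_apply_eq_mulVec_apply h i j
  exact filter_mulVec_ne_zero_subset_nonzeroRows B z (by simpa [← hz])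

theorem card_le_card_nonzeroRows [StrongRankCondition R] {B : Matrix m ι R}
    (hB : LinearIndependent R B.col) : Fintype.card ι ≤ #B.nonzeroRows := by
  have hinj : Function.Injective (B.submatrix ((↑) : B.nonzeroRows → m) id).mulVec := by
    intro v w hvw
    refine mulVec_injective_iff.mpr hB (funext fun i => ?_)
    by_cases hi : i ∈ B.nonzeroRows
    · exact congrFun hvw ⟨i, hi⟩
    · have (u : ι → R) : (B *ᵥ u) i = 0 := by
        simpa using mt (B.filter_mulVec_ne_zero_subset_nonzeroRows u ·) hi
      rw [this, this]
  simpa using (mulVec_injective_iff.mp hinj).fintype_card_le_finrank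

end Rows

end Matrix

open Matrix

theorem sublattice_of_no_instance_general {n m r : ℕ} (d : ℕ)
    (B : Matrix (Fin n) (Fin m) ℤ)
    (hNO : ∀ x : Fin m → ℤ, B.mulVec x ≠ 0 →
      d ≤ (Finset.univ.filter fun i => B.mulVec x i ≠ 0).card ∨
      ((∀ i, Even (B.mulVec x i)) ∧
        (d : ℝ) / 4 ≤ ((Finset.univ.filter fun i => B.mulVec x i ≠ 0).card : ℝ)) ∨
      ((∀ i, Even (B.mulVec x i)) ∧
        (d : ℝ) ≤ Real.sqrt (∑ i, ((B.mulVec x i : ℝ)) ^ 2)))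
    (hr : 0 < r)
    (B' : Matrix (Fin n) (Fin r) ℤ) (hB' : LinearIndependent ℤ B'.transpose)
    (hsub : ∀ c : Fin r, ∃ x : Fin m → ℤ, (fun i => B' i c) = B.mulVec x) :
    (∀ C : Matrix (Fin n) (Fin r) ℤ,
        (∀ y : Fin r → ℤ, ∃ z : Fin r → ℤ, C.mulVec y = B'.mulVec z) →
        (∀ y : Fin r → ℤ, ∃ z : Fin r → ℤ, B'.mulVec y = C.mulVec z) →
        d ≤ (Finset.univ.filter fun i => (fun j => C i j) ≠ 0).card) ∨
    (∀ C : Matrix (Fin n) (Fin r) ℤ,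
        (∀ y : Fin r → ℤ, ∃ z : Fin r → ℤ, C.mulVec y = B'.mulVec z) →
        (∀ y : Fin r → ℤ, ∃ z : Fin r → ℤ, B'.mulVec y = C.mulVec z) →
        (∀ i j, Even (C i j)) ∧
          (d : ℝ) / 4 ≤ ((Finset.univ.filter fun i => (fun j => C i j) ≠ 0).card : ℝ)) ∨
    (d : ℝ) ^ ((r : ℝ) / 2) ≤ Real.sqrt (((B'ᵀ * B').det : ℤ) : ℝ) := by
  set T := B'.nonzeroRows
  have hL' : ∀ z, B' *ᵥ z ≠ 0 → #T < d → (∀ i, Even ((B' *ᵥ z) i)) ∧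
      ((d : ℝ) / 4 ≤ #T ∨ (d : ℝ) ≤ √(∑ i, ((B' *ᵥ z) i : ℝ) ^ 2)) := by
    intro z hz hTd
    obtain ⟨x, hx⟩ := exists_mulVec_eq_mulVec_of_forall_col hsub z
    have hsupp : #{i | (B *ᵥ x) i ≠ 0} ≤ #T :=
      card_le_card (hx ▸ B'.filter_mulVec_ne_zero_subset_nonzeroRows z)
    rw [hx] at hz ⊢
    rcases hNO x hz with h | ⟨hev, h⟩ | ⟨hev, h⟩
    · omega
    · exact ⟨hev, .inl (h.trans (by exact_mod_cast hsupp))⟩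
    · exact ⟨hev, .inr h⟩
  have hrows (C : Matrix (Fin n) (Fin r) ℤ) (hC : ∀ y, ∃ z, B' *ᵥ y = C *ᵥ z) :
      #T ≤ #C.nonzeroRows :=
    card_le_card (nonzeroRows_subset_of_forall_exists_mulVec_eq hC)
  rcases le_or_gt d #T with hdT | hdT
  · exact .inl fun C _ hC => hdT.trans (hrows C hC)
  by_cases hd4 : (d : ℝ) / 4 ≤ #T
  · refine .inr (.inl fun C hC hC' =>
      ⟨fun i j => ?_, hd4.trans (by exact_mod_cast hrows C hC')⟩)
    obtain ⟨z, hz⟩ := exists_apply_eq_mulVec_apply hC i j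
    by_cases h0 : B' *ᵥ z = 0
    · simp [hz, h0]
    · exact hz ▸ (hL' z h0 hdT).1 i
  rw [not_le] at hd4
  have hrd : (r : ℝ) ≤ d := by
    have : r ≤ #T := by simpa using card_le_card_nonzeroRows hB'
    have : (r : ℝ) ≤ #T := by exact_mod_cast this
    linarith
  have hmin (c : Fin r → ℤ) (hc : c ≠ 0) : (d : ℝ) ≤ √(∑ i, ((B' *ᵥ c) i : ℝ) ^ 2) :=
    (hL' c (by simpa using (mulVec_injective_iff.mpr hB').ne hc) hdT).2.resolve_left hd4.not_ge
  have := Fin.pos_iff_nonempty.mp hr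
  refine .inr (.inr ?_)
  calc (d : ℝ) ^ ((r : ℝ) / 2) ≤ (d / √r) ^ r := Real.rpow_div_two_le_div_sqrt_pow hr hrd
    _ ≤ √((B'ᵀ * B').det : ℝ) := by
      simpa using B'.pow_div_sqrt_card_le_sqrt_det_transpose_mul_self_int hB' (by linarith) hmin

theorem sublattice_of_no_instance {n m r : ℕ} (d : ℕ)
    (B : Matrix (Fin n) (Fin m) ℤ) (hB : LinearIndependent ℤ B.transpose)
    (hNO : ∀ x : Fin m → ℤ, B.mulVec x ≠ 0 →
      d ≤ (Finset.univ.filter fun i => B.mulVec x i ≠ 0).card ∨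
      ((∀ i, Even (B.mulVec x i)) ∧
        (d : ℝ) / 4 ≤ ((Finset.univ.filter fun i => B.mulVec x i ≠ 0).card : ℝ)) ∨
      ((∀ i, Even (B.mulVec x i)) ∧
        (d : ℝ) ≤ Real.sqrt (∑ i, ((B.mulVec x i : ℝ)) ^ 2)))
    (hr : 0 < r)
    (B' : Matrix (Fin n) (Fin r) ℤ) (hB' : LinearIndependent ℤ B'.transpose)
    (hsub : ∀ c : Fin r, ∃ x : Fin m → ℤ, (fun i => B' i c) = B.mulVec x) :
    (∀ C : Matrix (Fin n) (Fin r) ℤ,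
        (∀ y : Fin r → ℤ, ∃ z : Fin r → ℤ, C.mulVec y = B'.mulVec z) →
        (∀ y : Fin r → ℤ, ∃ z : Fin r → ℤ, B'.mulVec y = C.mulVec z) →
        d ≤ (Finset.univ.filter fun i => (fun j => C i j) ≠ 0).card) ∨
    (∀ C : Matrix (Fin n) (Fin r) ℤ,
        (∀ y : Fin r → ℤ, ∃ z : Fin r → ℤ, C.mulVec y = B'.mulVec z) →
        (∀ y : Fin r → ℤ, ∃ z : Fin r → ℤ, B'.mulVec y = C.mulVec z) →
        (∀ i j, Even (C i j)) ∧
          (d : ℝ) / 4 ≤ ((Finset.univ.filter fun i => (fun j => C i j) ≠ 0).card : ℝ)) ∨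
    (d : ℝ) ^ ((r : ℝ) / 2) ≤ Real.sqrt (((B'ᵀ * B').det : ℤ) : ℝ) :=
  sublattice_of_no_instance_general d B hNO hr B' hB' hsub
end

section
/- Let S ∈ {0,1}^{n''×n'} be a matrix (sets-as-columns incidence matrix), let L = {y ∈ ℤ^{n'} : S y = 0}, and let t ∈ ℤ^{n'} satisfy S t = −(1,…,1). Suppose that every subset of columns of S covering all elements of [n''] (i.e., whose supports union to [n'']) has size at least d. Then for every z ∈ L and every nonzero integer j₀, the vector z + j₀·t has at least d nonzero coordinates. -/
open Matrix

theorem no_cover_support_ge {n'' n' : ℕ} (d : ℕ) (S : Matrix (Fin n'') (Fin n') ℤ)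
    (hS01 : ∀ i j, S i j = 0 ∨ S i j = 1)
    (t : Fin n' → ℤ) (ht : S.mulVec t = fun _ => -1)
    (hcover : ∀ I : Finset (Fin n'), (∀ i : Fin n'', ∃ j ∈ I, S i j = 1) → d ≤ I.card)
    (z : Fin n' → ℤ) (hz : S.mulVec z = 0) (j₀ : ℤ) (hj₀ : j₀ ≠ 0) :
    d ≤ (Finset.univ.filter fun j => z j + j₀ * t j ≠ 0).card := by
  apply hcover
  intro i
  have h1 : ∑ j, S i j * z j = 0 := congrFun hz i
  have h2 : ∑ j, S i j * t j = -1 := congrFun ht i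
  have hsum : ∑ j, S i j * (z j + j₀ * t j) = -j₀ := by
    calc ∑ j, S i j * (z j + j₀ * t j)
        = (∑ j, S i j * z j) + j₀ * ∑ j, S i j * t j := by
          rw [Finset.mul_sum, ← Finset.sum_add_distrib]
          exact Finset.sum_congr rfl fun j _ => by ring
      _ = -j₀ := by rw [h1, h2]; ring
  have hne : ∃ j, S i j * (z j + j₀ * t j) ≠ 0 := by
    by_contra h
    push_neg at h
    rw [Finset.sum_eq_zero (fun j _ => h j)] at hsum
    exact hj₀ (by linarith)
  obtain ⟨j, hj⟩ := hne
  refine ⟨j, Finset.mem_filter.mpr ⟨Finset.mem_univ j, fun h => hj (by rw [h, mul_zero])⟩, ?_⟩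
  rcases hS01 i j with h | h
  · exact absurd (by rw [h, zero_mul]) hj
  · exact h
end
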